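/- arXiv:1612.03570 — 2 statements merged into one kernel-verified Lean document; each statement's English description precedes it below -/
import Mathlib

section
/- Let A, B be Hermitian positive semidefinite n×n matrices such that tr(A) = tr(A^{1/2} B A^{1/2}) = tr(B A^{1/2} B A^{1/2}). Then A^{1/2} B A^{1/2} = A, i.e., A is a fixed point of the map Λ ↦ Λ^{1/2} B Λ^{1/2}. -/
/-!
Put `S = A^{1/2}` and `D = B - 1`. Expanding, the two trace conditions say exactly that
`tr (D S D S) = 0`. Writing `S = Rᴴ R`, this trace is the squared Frobenius norm of the
Hermitian matrix `R D Rᴴ`, which therefore vanishes; hence `S D S = Rᴴ (R D Rᴴ) R = 0`,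
i.e. `S B S = S² = A`.
-/

open Matrix ComplexOrder

/-- The positive semidefinite square root of a positive semidefinite matrix
(the definition `Matrix.PosSemidef.sqrt` of the older Mathlib, since removed). -/
noncomputable def Matrix.PosSemidef.sqrt {n 𝕜 : Type*} [Fintype n] [DecidableEq n] [RCLike 𝕜]
    {A : Matrix n n 𝕜} (hA : A.PosSemidef) : Matrix n n 𝕜 :=
  hA.1.eigenvectorUnitary.1 * diagonal ((↑) ∘ (Real.sqrt ∘ hA.1.eigenvalues)) *
    (star hA.1.eigenvectorUnitary : Matrix n n 𝕜)

open scoped MatrixOrder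

namespace Matrix

variable {n 𝕜 : Type*} [Fintype n] [RCLike 𝕜]

section sqrt

variable [DecidableEq n] {A : Matrix n n 𝕜}

theorem PosSemidef.posSemidef_sqrt (hA : A.PosSemidef) : hA.sqrt.PosSemidef := by
  have hd : (diagonal ((↑) ∘ (Real.sqrt ∘ hA.1.eigenvalues)) : Matrix n n 𝕜).PosSemidef :=
    posSemidef_diagonal_iff.mpr fun i => by simp [Real.sqrt_nonneg]
  simpa [PosSemidef.sqrt, star_eq_conjTranspose] using
    hd.mul_mul_conjTranspose_same hA.1.eigenvectorUnitary.1

theorem PosSemidef.sqrt_mul_self (hA : A.PosSemidef) : hA.sqrt * hA.sqrt = A := by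
  set U : Matrix n n 𝕜 := hA.1.eigenvectorUnitary.1
  have hU : star U * U = 1 := Unitary.coe_star_mul_self _
  conv_rhs => rw [hA.1.spectral_theorem, Unitary.conjStarAlgAut_apply]
  calc hA.sqrt * hA.sqrt
      = U * (diagonal ((↑) ∘ (Real.sqrt ∘ hA.1.eigenvalues)) * (star U * U) *
          diagonal ((↑) ∘ (Real.sqrt ∘ hA.1.eigenvalues))) * star U := by
        simp only [PosSemidef.sqrt, U, mul_assoc]
    _ = _ := by
      rw [hU, mul_one, diagonal_mul_diagonal]
      congr 3
      funext i
      simp only [Function.comp_apply, ← RCLike.ofReal_mul,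
        Real.mul_self_sqrt (hA.eigenvalues_nonneg i)]

end sqrt

theorem PosSemidef.mul_mul_eq_zero_of_trace_mul_mul_mul_eq_zero {S D : Matrix n n 𝕜}
    (hS : S.PosSemidef) (hD : D.IsHermitian) (h : (D * S * D * S).trace = 0) :
    S * D * S = 0 := by
  classical
  obtain ⟨R, rfl⟩ := CStarAlgebra.nonneg_iff_eq_star_mul_self.mp hS.nonneg
  rw [star_eq_conjTranspose] at h ⊢
  set H := R * D * Rᴴ
  have hH : Hᴴ = H := by simp [H, hD.eq, mul_assoc]
  have hHH : (Hᴴ * H).trace = 0 := by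
    rw [hH, ← h]
    simp only [H, mul_assoc]
    rw [trace_mul_comm]
    simp only [mul_assoc]
  have H0 : H = 0 := trace_conjTranspose_mul_self_eq_zero_iff.mp hHH
  calc Rᴴ * R * D * (Rᴴ * R) = Rᴴ * H * R := by simp only [H, mul_assoc]
    _ = 0 := by rw [H0, mul_zero, zero_mul]

theorem PosSemidef.mul_mul_eq_mul_self_of_trace_eq {S B : Matrix n n 𝕜}
    (hS : S.PosSemidef) (hB : B.IsHermitian) (h1 : (S * B * S).trace = (S * S).trace)
    (h2 : (B * S * B * S).trace = (S * S).trace) :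
    S * B * S = S * S := by
  classical
  have htr : ((B - 1) * S * (B - 1) * S).trace = 0 := by
    have hexpand :
        (B - 1) * S * (B - 1) * S = B * S * B * S - S * B * S - B * S * S + S * S := by
      noncomm_ring
    rw [hexpand, trace_add, trace_sub, trace_sub, trace_mul_cycle B, h1, h2, sub_self,
      sub_add_cancel]
  have := hS.mul_mul_eq_zero_of_trace_mul_mul_mul_eq_zero (hB.sub isHermitian_one) htr
  rwa [mul_sub, sub_mul, mul_one, sub_eq_zero] at this

end Matrix

/-- equal traces of the first iterates force `A^{1/2} B A^{1/2} = A`. -/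
theorem stmt_4 (n : ℕ) (A B : Matrix (Fin n) (Fin n) ℂ)
    (hA : A.PosSemidef) (hB : B.PosSemidef)
    (h1 : (hA.sqrt * B * hA.sqrt).trace = A.trace)
    (h2 : (B * hA.sqrt * B * hA.sqrt).trace = A.trace) :
    hA.sqrt * B * hA.sqrt = A := by
  have key := hA.posSemidef_sqrt.mul_mul_eq_mul_self_of_trace_eq hB.1
    (by rw [h1, hA.sqrt_mul_self]) (by rw [h2, hA.sqrt_mul_self])
  rwa [hA.sqrt_mul_self] at key
end

section
/- Let x̄ ∈ ℂⁿ with ‖x̄‖ = 1 and P = x̄ x̄*. Let μ be a probability measure on X and g : X → ℂⁿ measurable with g(x)* P g(x) = |⟨x̄, g(x)⟩|² > 0 for μ-a.e. x. Then P is a fixed point of Θ, i.e., ∫ P^{1/2} g g* P^{1/2} / (g* P g) dμ = P. -/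
open MeasureTheory Matrix ComplexOrder

lemma aux_entry (n : ℕ) (a b : Fin n → ℂ) (i j : Fin n) :
    (vecMulVec a (star a) * vecMulVec b (star b) * vecMulVec a (star a)) i j
      = ((star a ⬝ᵥ b) * (star b ⬝ᵥ a)) * (vecMulVec a (star a)) i j := by
  simp only [Matrix.mul_apply, vecMulVec_apply, dotProduct, Pi.star_apply]
  simp only [Finset.sum_mul, Finset.mul_sum]
  apply Finset.sum_congr rfl
  intro k _
  apply Finset.sum_congr rfl
  intro l _
  ring

lemma aux_dot (n : ℕ) (a b : Fin n → ℂ) :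
    star b ⬝ᵥ (vecMulVec a (star a)) *ᵥ b = (star b ⬝ᵥ a) * (star a ⬝ᵥ b) := by
  simp only [dotProduct, mulVec, dotProduct, vecMulVec_apply, Pi.star_apply]
  simp only [Finset.mul_sum, Finset.sum_mul]
  rw [Finset.sum_comm]
  apply Finset.sum_congr rfl
  intro k _
  apply Finset.sum_congr rfl
  intro l _
  ring

/-- rank-one orthogonal projections are fixed points of the Pavon–Ferrante map. -/
theorem stmt_11 {X : Type*} [MeasurableSpace X] (μ : Measure X) [IsProbabilityMeasure μ]
    (n : ℕ) (g : X → Fin n → ℂ) (hg : Measurable g)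
    (xbar : Fin n → ℂ) (hxbar : star xbar ⬝ᵥ xbar = 1)
    (P : Matrix (Fin n) (Fin n) ℂ) (hP : P = vecMulVec xbar (star xbar))
    (hpos : ∀ᵐ x ∂μ, 0 < (star (g x) ⬝ᵥ P *ᵥ g x).re) :
    ∀ i j, (∫ x,
      (((star (g x) ⬝ᵥ P *ᵥ g x).re)⁻¹ •
        (P * vecMulVec (g x) (star (g x)) * P)) i j ∂μ) = P i j := by
  intro i j
  have hae : ∀ᵐ x ∂μ,
      (((star (g x) ⬝ᵥ P *ᵥ g x).re)⁻¹ •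
        (P * vecMulVec (g x) (star (g x)) * P)) i j = P i j := by
    filter_upwards [hpos] with x hx
    subst hP
    set s : ℂ := (star (g x) ⬝ᵥ xbar) * (star xbar ⬝ᵥ g x) with hs
    have hdot : star (g x) ⬝ᵥ (vecMulVec xbar (star xbar)) *ᵥ g x = s := aux_dot n xbar (g x)
    have hconj : star (g x) ⬝ᵥ xbar = starRingEnd ℂ (star xbar ⬝ᵥ g x) := by
      simp [dotProduct, map_sum, mul_comm]
    have hsreal : s = (s.re : ℂ) := by
      rw [hs, hconj, mul_comm, Complex.mul_conj]
      simp
    rw [hdot] at hx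
    have hne : (s.re : ℝ) ≠ 0 := ne_of_gt hx
    rw [Matrix.smul_apply, hdot, aux_entry]
    have hcomm : (star xbar ⬝ᵥ g x) * (star (g x) ⬝ᵥ xbar) = s := mul_comm _ _
    rw [hcomm]
    rw [Complex.real_smul, hsreal]
    simp only [Complex.ofReal_re]
    rw [← mul_assoc, ← Complex.ofReal_mul,
      inv_mul_cancel₀ hne, Complex.ofReal_one, one_mul]
  rw [integral_congr_ae hae, integral_const]
  simp
end
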